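/- Assume the unit η of the adjunction P ⊣ U is an isomorphism. If for every object X of 𝓒 the counit component ε_{Y(X)} : P(F(X)) ⟶ Y(X) is an isomorphism in 𝓟𝓒, then the Freyd functor F : 𝓒 ⥤ 𝓟𝓑 is faithful. -/

import Mathlib

open CategoryTheory Opposite

universe v u

variable (B C : Type u) [Category.{v} B] [Category.{v} C] [Preadditive B] [Preadditive C]

/-- The category of additive presheaves (of abelian groups) on a preadditive category. -/
noncomputable abbrev AddPresheaf (D : Type u) [Category.{v} D] [Preadditive D] :=
  Dᵒᵖ ⥤+ AddCommGrpCat.{v}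

/-- The restriction functor `U : 𝓟𝓒 ⥤ 𝓟𝓑` given by precomposition with `ιᵒᵖ`. -/
noncomputable def restrictU (ι : B ⥤ C) [ι.Additive] :
    AddPresheaf C ⥤ AddPresheaf B where
  obj G := ⟨ι.op ⋙ G.1, letI := G.2; show (ι.op ⋙ G.1).Additive from inferInstance⟩
  map α := ObjectProperty.homMk (Functor.whiskerLeft ι.op α.hom)

/-- The additive Yoneda embedding `Y : 𝓒 ⥤ 𝓟𝓒`, `Y(X) = 𝓒(−, X)`. -/
noncomputable def yonedaAdd : C ⥤ AddPresheaf C where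
  obj X := ⟨preadditiveYoneda.obj X, show (preadditiveYoneda.obj X).Additive from inferInstance⟩
  map f := ObjectProperty.homMk (preadditiveYoneda.map f)

/-- The Freyd functor `F = Y ⋙ U : 𝓒 ⥤ 𝓟𝓑`, `F(X) = 𝓒(ι(−), X)`. -/
noncomputable def freydF (ι : B ⥤ C) [ι.Additive] : C ⥤ AddPresheaf B :=
  yonedaAdd C ⋙ restrictU B C ι

namespace CategoryTheory.Adjunction

variable {A D E : Type*} [Category A] [Category D] [Category E] {L : D ⥤ E} {R : E ⥤ D}

/-- Naturality of the counit gives `L (R f) ≫ ε_Y = ε_X ≫ f`, so `R f` determines `ε_X ≫ f`. -/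
lemma map_injective_of_epi_counit_app (adj : L ⊣ R) {X Y : E} [Epi (adj.counit.app X)] :
    Function.Injective (R.map : (X ⟶ Y) → (R.obj X ⟶ R.obj Y)) := by
  intro f g hfg
  rw [← cancel_epi (adj.counit.app X), ← adj.counit_naturality f, ← adj.counit_naturality g,
    hfg]

lemma faithful_comp_of_epi_counit_app (adj : L ⊣ R) (G : A ⥤ E) [G.Faithful]
    [∀ X, Epi (adj.counit.app (G.obj X))] : (G ⋙ R).Faithful where
  map_injective hfg := G.map_injective (adj.map_injective_of_epi_counit_app hfg)

end CategoryTheory.Adjunction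

instance yonedaAdd_faithful : (yonedaAdd C).Faithful where
  map_injective hfg := preadditiveYoneda.map_injective (congrArg (·.hom) hfg)

theorem freyd_faithful_of_counit_iso (ι : B ⥤ C) [ι.Additive]
    (P : AddPresheaf B ⥤ AddPresheaf C) (adj : P ⊣ restrictU B C ι)
    (hε : ∀ X : C, IsIso (adj.counit.app ((yonedaAdd C).obj X))) :
    (freydF B C ι).Faithful :=
  adj.faithful_comp_of_epi_counit_app (yonedaAdd C)
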